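/- The Superfast Encoding operators satisfy, for any choice of edge orderings <_i and antisymmetric orientation ε: B̃_j† = B̃_j, Ã_{jk}† = Ã_{jk}, B̃_j² = I, Ã_{jk}² = I, B̃_j B̃_k = B̃_k B̃_j, Ã_{jk} = −Ã_{kj}, Ã_{jk} B̃_l = (−1)^{δ_{jl}+δ_{kl}} B̃_l Ã_{jk}, Ã_{jk} Ã_{lq} = (−1)^{δ_{jl}+δ_{jq}+δ_{kl}+δ_{kq}} Ã_{lq} Ã_{jk} for distinct edges, and ∏_{i ∈ V} B̃_i = I. -/
import Mathlib


open Matrix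

/-- Labels for single-qubit Pauli matrices. -/
inductive P1 : Type
  | I : P1
  | X : P1
  | Y : P1
  | Z : P1
deriving DecidableEq

/-- The matrix entries of a single-qubit Pauli matrix, with the qubit basis indexed by
`Bool` (`false = |0⟩`, `true = |1⟩`). -/
def P1.entry : P1 → Bool → Bool → ℂ
  | P1.I, a, b => if a = b then 1 else 0
  | P1.X, a, b => if a = b then 0 else 1
  | P1.Y, a, b => if a = b then 0 else if a then Complex.I else -Complex.I
  | P1.Z, a, b => if a = b then (if a then -1 else 1) else 0

/-- The multi-qubit Pauli matrix `⨂_{q ∈ Q} P_{f q}` on the qubits indexed by `Q`,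
acting on `(ℂ²)^{⊗Q}` (whose standard basis is indexed by `Q → Bool`). -/
noncomputable def PauliMatrix {Q : Type*} [Fintype Q] (f : Q → P1) :
    Matrix (Q → Bool) (Q → Bool) ℂ :=
  Matrix.of fun a b => ∏ q, (f q).entry (a q) (b q)

/-- The weight of a Pauli operator: the number of qubits on which it acts nontrivially. -/
noncomputable def pweight {Q : Type*} [Fintype Q] (f : Q → P1) : ℕ :=
  (Finset.univ.filter fun q => f q ≠ P1.I).card

section SuperfastEncoding

variable {V : Type*} [Fintype V] [DecidableEq V] (G : SimpleGraph V) [DecidableRel G.Adj]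

/-- The vertex operator `B̃_j = ∏_{k : (j,k) ∈ E} Z_{jk}` of the Superfast Encoding:
Pauli `Z` on every qubit (edge) incident to the vertex `j`. -/
noncomputable def BtSF (j : V) :
    Matrix (↥G.edgeSet → Bool) (↥G.edgeSet → Bool) ℂ :=
  PauliMatrix fun e => if j ∈ (e : Sym2 V) then P1.Z else P1.I

/-- The edge operator
`Ã_{jk} = ε_{jk} X_{jk} ∏_{(j,p) <_j (j,k)} Z_{jp} ∏_{(k,q) <_k (k,j)} Z_{kq}`
of the Superfast Encoding.  The linear order `<_i` on the edges incident to `i` is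
represented by a ranking function `rank i : Sym2 V → ℕ`, injective on incident edges. -/
noncomputable def AtSF (rank : V → Sym2 V → ℕ) (eps : V → V → ℂ) (j k : V) :
    Matrix (↥G.edgeSet → Bool) (↥G.edgeSet → Bool) ℂ :=
  eps j k • PauliMatrix fun e : ↥G.edgeSet =>
    if (e : Sym2 V) = s(j, k) then P1.X
    else if (j ∈ (e : Sym2 V) ∧ rank j (e : Sym2 V) < rank j s(j, k)) ∨
            (k ∈ (e : Sym2 V) ∧ rank k (e : Sym2 V) < rank k s(j, k)) then P1.Z
    else P1.I

/-- `ζ(0), …, ζ(s) = ζ(0)` is a closed loop in `G`. -/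
def IsLoopIn (s : ℕ) (ζ : ℕ → V) : Prop :=
  ζ s = ζ 0 ∧ ∀ t < s, G.Adj (ζ t) (ζ (t + 1))

/-- The loop operator `Ã(ζ) = i^s Ã_{ζ(0)ζ(1)} ⋯ Ã_{ζ(s-1)ζ(0)}`. -/
noncomputable def loopOpSF (rank : V → Sym2 V → ℕ) (eps : V → V → ℂ)
    (s : ℕ) (ζ : ℕ → V) : Matrix (↥G.edgeSet → Bool) (↥G.edgeSet → Bool) ℂ :=
  (Complex.I ^ s) •
    (((List.range s).map (fun t => AtSF G rank eps (ζ t) (ζ (t + 1)))).prod)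

/-- The stabilizer group `S` generated by all loop operators (as a submonoid of the
matrix algebra; every loop operator is an involution, so this is a group). -/
noncomputable def stabSF (rank : V → Sym2 V → ℕ) (eps : V → V → ℂ) :
    Submonoid (Matrix (↥G.edgeSet → Bool) (↥G.edgeSet → Bool) ℂ) :=
  Submonoid.closure {M | ∃ s ζ, IsLoopIn G s ζ ∧ M = loopOpSF G rank eps s ζ}

/-- A Pauli operator `c • PauliMatrix f` is a logical operator of the code: it commutes
with every element of the stabilizer group `S` and is not proportional to any element
of `S`. -/
def IsLogicalSF (rank : V → Sym2 V → ℕ) (eps : V → V → ℂ) (c : ℂ) (f : ↥G.edgeSet → P1) :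
    Prop :=
  (∀ M ∈ stabSF G rank eps, (c • PauliMatrix f) * M = M * (c • PauliMatrix f)) ∧
  ¬ ∃ (c' : ℂ) (M : Matrix (↥G.edgeSet → Bool) (↥G.edgeSet → Bool) ℂ),
      M ∈ stabSF G rank eps ∧ c • PauliMatrix f = c' • M

end SuperfastEncoding


section AuxPauli

namespace P1

/-- Product table for Pauli labels (up to phase). -/
def mulP : P1 → P1 → P1
  | I, p => p
  | p, I => p
  | X, X => I
  | Y, Y => I
  | Z, Z => I
  | X, Y => Z
  | Y, X => Z
  | Y, Z => X
  | Z, Y => X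
  | Z, X => Y
  | X, Z => Y

/-- Phase table for Pauli label products. -/
def ph : P1 → P1 → ℂ
  | X, Y => Complex.I
  | Y, X => -Complex.I
  | Y, Z => Complex.I
  | Z, Y => -Complex.I
  | Z, X => Complex.I
  | X, Z => -Complex.I
  | _, _ => 1

/-- Commutation sign of two Pauli labels. -/
def sg (p q : P1) : ℂ := if p = I ∨ q = I ∨ p = q then 1 else -1

lemma entry_mul_sum (p q : P1) (a b : Bool) :
    (∑ c : Bool, p.entry a c * q.entry c b) = ph p q * entry (mulP p q) a b := by
  rcases p <;> rcases q <;> rcases a <;> rcases b <;>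
    simp [P1.entry, P1.ph, P1.mulP, Fintype.sum_bool]

lemma entry_conj (p : P1) (a b : Bool) :
    (starRingEnd ℂ) (entry p b a) = entry p a b := by
  rcases p <;> rcases a <;> rcases b <;> simp [P1.entry]

lemma mulP_self (p : P1) : mulP p p = I := by rcases p <;> rfl
lemma ph_self (p : P1) : ph p p = 1 := by rcases p <;> rfl
lemma mulP_comm (p q : P1) : mulP p q = mulP q p := by rcases p <;> rcases q <;> rfl
lemma ph_comm (p q : P1) : ph p q = sg p q * ph q p := by
  rcases p <;> rcases q <;> simp [ph, sg]

lemma sg_ZI {p q : P1} (hp : p = P1.I ∨ p = P1.Z) (hq : q = P1.I ∨ q = P1.Z) :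
    sg p q = 1 := by
  rcases hp with rfl | rfl <;> rcases hq with rfl | rfl <;> simp [sg]

lemma ph_ZI {p q : P1} (hp : p = P1.I ∨ p = P1.Z) (hq : q = P1.I ∨ q = P1.Z) :
    ph p q = 1 := by
  rcases hp with rfl | rfl <;> rcases hq with rfl | rfl <;> rfl

@[simp] lemma sg_X_Z : sg X Z = -1 := by simp [sg]
@[simp] lemma sg_X_I : sg X I = 1 := by simp [sg]
@[simp] lemma sg_Z_X : sg Z X = -1 := by simp [sg]
@[simp] lemma sg_I_X : sg I X = 1 := by simp [sg]

end P1

variable {Q : Type*} [Fintype Q] [DecidableEq Q]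

lemma PauliMatrix_conjTranspose (f : Q → P1) : (PauliMatrix f)ᴴ = PauliMatrix f := by
  ext a b
  simp [PauliMatrix, Matrix.conjTranspose_apply, map_prod, P1.entry_conj]

lemma PauliMatrix_one : PauliMatrix (fun _ : Q => P1.I) = 1 := by
  ext a b
  simp only [PauliMatrix, Matrix.of_apply, P1.entry, Matrix.one_apply]
  by_cases h : a = b
  · simp [h]
  · obtain ⟨q, hq⟩ := Function.ne_iff.1 h
    rw [if_neg h]
    exact Finset.prod_eq_zero (Finset.mem_univ q) (by simp [hq])

lemma PauliMatrix_mul (f g : Q → P1) :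
    PauliMatrix f * PauliMatrix g =
      (∏ q, P1.ph (f q) (g q)) • PauliMatrix (fun q => P1.mulP (f q) (g q)) := by
  ext a b
  simp only [Matrix.mul_apply, PauliMatrix, Matrix.of_apply, Matrix.smul_apply, smul_eq_mul]
  simp only [← Finset.prod_mul_distrib]
  calc ∑ c : Q → Bool, ∏ q, ((f q).entry (a q) (c q) * (g q).entry (c q) (b q))
      = ∏ q, ∑ c : Bool, ((f q).entry (a q) c * (g q).entry c (b q)) := by
        rw [Finset.prod_univ_sum]
        exact (Finset.sum_congr (by ext c; simp) fun _ _ => rfl)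
    _ = _ := Finset.prod_congr rfl fun q _ => P1.entry_mul_sum _ _ _ _

lemma PauliMatrix_sq (f : Q → P1) : PauliMatrix f * PauliMatrix f = 1 := by
  rw [PauliMatrix_mul]
  simp [P1.ph_self, P1.mulP_self, PauliMatrix_one]

lemma PauliMatrix_comm (f g : Q → P1) :
    PauliMatrix f * PauliMatrix g =
      (∏ q, P1.sg (f q) (g q)) • (PauliMatrix g * PauliMatrix f) := by
  rw [PauliMatrix_mul, PauliMatrix_mul, smul_smul, ← Finset.prod_mul_distrib]
  congr 1
  · exact Finset.prod_congr rfl fun q _ => P1.ph_comm _ _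
  · ext a b; simp [PauliMatrix, P1.mulP_comm]

lemma smul_pauli_comm (c s : ℂ) (f g : Q → P1)
    (h : (∏ q, P1.sg (f q) (g q)) = s) :
    (c • PauliMatrix f) * PauliMatrix g = s • (PauliMatrix g * (c • PauliMatrix f)) := by
  rw [smul_mul_assoc, mul_smul_comm, PauliMatrix_comm f g, h, smul_smul, smul_smul, mul_comm]

lemma smul_pauli_comm₂ (c d s : ℂ) (f g : Q → P1)
    (h : (∏ q, P1.sg (f q) (g q)) = s) :
    (c • PauliMatrix f) * (d • PauliMatrix g) =
      s • ((d • PauliMatrix g) * (c • PauliMatrix f)) := by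
  rw [smul_mul_assoc, mul_smul_comm, smul_mul_assoc, mul_smul_comm,
    PauliMatrix_comm f g, h, smul_smul, smul_smul, smul_smul, smul_smul]
  congr 1
  ring

lemma shared_unique {V : Type*} {j k l q x y : V} (hjk : j ≠ k)
    (hne : s(j, k) ≠ s(l, q)) (hx1 : x ∈ s(j, k)) (hx2 : x ∈ s(l, q))
    (hy1 : y ∈ s(j, k)) (hy2 : y ∈ s(l, q)) : x = y := by
  simp only [Sym2.mem_iff] at hx1 hx2 hy1 hy2
  rcases hx1 with rfl | rfl <;> rcases hy1 with rfl | rfl <;> try rfl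
  all_goals
    exfalso; apply hne; rw [Sym2.eq_iff]
  · rcases hx2 with rfl | rfl <;> rcases hy2 with h | h <;> tauto
  · rcases hx2 with h | h <;> rcases hy2 with rfl | rfl <;> tauto

end AuxPauli

/-- The algebraic relations satisfied by the Superfast Encoding operators, together with
the global constraint `∏_{i ∈ V} B̃_i = I`. -/
theorem stmt8 {V : Type*} [Fintype V] [DecidableEq V] (G : SimpleGraph V)
    [DecidableRel G.Adj] (hconn : G.Connected)
    (rank : V → Sym2 V → ℕ)
    (hrank : ∀ i : V, Set.InjOn (rank i) {e : Sym2 V | e ∈ G.edgeSet ∧ i ∈ e})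
    (eps : V → V → ℂ)
    (heps : ∀ j k, G.Adj j k → (eps j k = 1 ∨ eps j k = -1) ∧ eps k j = - eps j k) :
    (∀ j : V, (BtSF G j)ᴴ = BtSF G j) ∧
    (∀ j k, G.Adj j k → (AtSF G rank eps j k)ᴴ = AtSF G rank eps j k) ∧
    (∀ j : V, BtSF G j * BtSF G j = 1) ∧
    (∀ j k, G.Adj j k → AtSF G rank eps j k * AtSF G rank eps j k = 1) ∧
    (∀ j k : V, BtSF G j * BtSF G k = BtSF G k * BtSF G j) ∧
    (∀ j k, G.Adj j k → AtSF G rank eps j k = - AtSF G rank eps k j) ∧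
    (∀ j k l, G.Adj j k →
      AtSF G rank eps j k * BtSF G l =
        ((-1 : ℂ) ^ ((if j = l then 1 else 0) + (if k = l then 1 else 0))) •
          (BtSF G l * AtSF G rank eps j k)) ∧
    (∀ j k l q, G.Adj j k → G.Adj l q → s(j, k) ≠ s(l, q) →
      AtSF G rank eps j k * AtSF G rank eps l q =
        ((-1 : ℂ) ^ ((if j = l then 1 else 0) + (if j = q then 1 else 0) +
            (if k = l then 1 else 0) + (if k = q then 1 else 0))) •
          (AtSF G rank eps l q * AtSF G rank eps j k)) ∧
    (∀ L : List V, L.Nodup → (∀ v : V, v ∈ L) → (L.map (BtSF G)).prod = 1) := by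
  have hB : ∀ j : V, BtSF G j =
      PauliMatrix (fun e : ↥G.edgeSet => if j ∈ (e : Sym2 V) then P1.Z else P1.I) :=
    fun j => rfl
  refine ⟨?_, ?_, ?_, ?_, ?_, ?_, ?_, ?_, ?_⟩
  · intro j
    rw [hB]; exact PauliMatrix_conjTranspose _
  · intro j k h
    unfold AtSF
    rw [Matrix.conjTranspose_smul, PauliMatrix_conjTranspose]
    rcases (heps j k h).1 with h1 | h1 <;> rw [h1] <;> simp
  · intro j
    rw [hB]; exact PauliMatrix_sq _
  · intro j k h
    unfold AtSF
    rw [smul_mul_assoc, mul_smul_comm, smul_smul, PauliMatrix_sq]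
    rcases (heps j k h).1 with h1 | h1 <;> rw [h1] <;> norm_num
  · intro j k
    rw [hB, hB, PauliMatrix_comm]
    rw [Finset.prod_eq_one fun e _ => P1.sg_ZI (by split <;> simp) (by split <;> simp),
      one_smul]
  · intro j k h
    unfold AtSF
    rw [(heps j k h).2, neg_smul, neg_neg]
    refine congrArg (fun f => eps j k • PauliMatrix f) (funext fun e => ?_)
    rw [show s(k, j) = s(j, k) from Sym2.eq_swap]
    by_cases he : (e : Sym2 V) = s(j, k)
    · simp [he]
    · simp only [if_neg he]
      congr 1
      exact propext (or_comm)
  · -- A-B commutation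
    intro j k l hjk
    have hjk' : j ≠ k := hjk.ne
    rw [hB]
    unfold AtSF
    apply smul_pauli_comm
    have hmem : s(j, k) ∈ G.edgeSet := G.mem_edgeSet.mpr hjk
    rw [Finset.prod_eq_single (⟨s(j, k), hmem⟩ : ↥G.edgeSet)]
    · rw [if_pos rfl]
      by_cases hl : l ∈ s(j, k)
      · rw [if_pos hl]
        rcases Sym2.mem_iff.mp hl with rfl | rfl
        · simp [hjk'.symm]
        · simp [hjk']
      · rw [if_neg hl]
        have h1 : j ≠ l := fun h => hl (h ▸ Sym2.mem_iff.mpr (Or.inl rfl))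
        have h2 : k ≠ l := fun h => hl (h ▸ Sym2.mem_iff.mpr (Or.inr rfl))
        simp [h1, h2]
    · intro b _ hb
      have hb' : (b : Sym2 V) ≠ s(j, k) := fun h => hb (Subtype.ext h)
      rw [if_neg hb']
      exact P1.sg_ZI (by split <;> simp) (by split <;> simp)
    · intro h; exact absurd (Finset.mem_univ _) h
  · -- A-A commutation
    intro j k l q hjk hlq hne
    unfold AtSF
    apply smul_pauli_comm₂
    have hmem1 : s(j, k) ∈ G.edgeSet := G.mem_edgeSet.mpr hjk
    have hmem2 : s(l, q) ∈ G.edgeSet := G.mem_edgeSet.mpr hlq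
    set e1 : ↥G.edgeSet := ⟨s(j, k), hmem1⟩ with he1
    set e2 : ↥G.edgeSet := ⟨s(l, q), hmem2⟩ with he2
    have hne12 : e1 ≠ e2 := fun h => hne (congrArg Subtype.val h)
    rw [← Finset.prod_subset (Finset.subset_univ ({e1, e2} : Finset ↥G.edgeSet))
        (fun b _ hb => by
          simp only [Finset.mem_insert, Finset.mem_singleton] at hb
          push_neg at hb
          have hb1 : (b : Sym2 V) ≠ s(j, k) := fun h => hb.1 (Subtype.ext h)
          have hb2 : (b : Sym2 V) ≠ s(l, q) := fun h => hb.2 (Subtype.ext h)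
          rw [if_neg hb1, if_neg hb2]
          exact P1.sg_ZI (by split <;> simp) (by split <;> simp))]
    rw [Finset.prod_pair hne12]
    have hv1 : (e1 : Sym2 V) = s(j, k) := rfl
    have hv2 : (e2 : Sym2 V) = s(l, q) := rfl
    rw [hv1, hv2, if_pos rfl, if_pos rfl, if_neg hne, if_neg (Ne.symm hne)]
    by_cases hsh : ∃ v, v ∈ s(j, k) ∧ v ∈ s(l, q)
    · obtain ⟨v, hvm1, hvm2⟩ := hsh
      have hrne : rank v s(j, k) ≠ rank v s(l, q) :=
        fun h => hne (hrank v ⟨hmem1, hvm1⟩ ⟨hmem2, hvm2⟩ h)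
      have hC2iff : ((l ∈ s(j, k) ∧ rank l s(j, k) < rank l s(l, q)) ∨
          (q ∈ s(j, k) ∧ rank q s(j, k) < rank q s(l, q))) ↔
          rank v s(j, k) < rank v s(l, q) := by
        constructor
        · rintro (⟨hl', hr⟩ | ⟨hq', hr⟩)
          · obtain rfl : l = v :=
              shared_unique hjk.ne hne hl' (Sym2.mem_iff.mpr (Or.inl rfl)) hvm1 hvm2
            exact hr
          · obtain rfl : q = v :=
              shared_unique hjk.ne hne hq' (Sym2.mem_iff.mpr (Or.inr rfl)) hvm1 hvm2
            exact hr
        · intro hlt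
          rcases Sym2.mem_iff.mp hvm2 with rfl | rfl
          · exact Or.inl ⟨hvm1, hlt⟩
          · exact Or.inr ⟨hvm1, hlt⟩
      have hC1iff : ((j ∈ s(l, q) ∧ rank j s(l, q) < rank j s(j, k)) ∨
          (k ∈ s(l, q) ∧ rank k s(l, q) < rank k s(j, k))) ↔
          rank v s(l, q) < rank v s(j, k) := by
        constructor
        · rintro (⟨hj', hr⟩ | ⟨hk', hr⟩)
          · obtain rfl : j = v :=
              shared_unique hjk.ne hne (Sym2.mem_iff.mpr (Or.inl rfl)) hj' hvm1 hvm2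
            exact hr
          · obtain rfl : k = v :=
              shared_unique hjk.ne hne (Sym2.mem_iff.mpr (Or.inr rfl)) hk' hvm1 hvm2
            exact hr
        · intro hlt
          rcases Sym2.mem_iff.mp hvm1 with rfl | rfl
          · exact Or.inl ⟨hvm2, hlt⟩
          · exact Or.inr ⟨hvm2, hlt⟩
      have hS : P1.sg P1.X
            (if (l ∈ s(j, k) ∧ rank l s(j, k) < rank l s(l, q)) ∨
                (q ∈ s(j, k) ∧ rank q s(j, k) < rank q s(l, q)) then P1.Z else P1.I) *
          P1.sg
            (if (j ∈ s(l, q) ∧ rank j s(l, q) < rank j s(j, k)) ∨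
                (k ∈ s(l, q) ∧ rank k s(l, q) < rank k s(j, k)) then P1.Z else P1.I)
            P1.X = -1 := by
        rcases lt_or_gt_of_ne hrne with h | h
        · rw [if_pos (hC2iff.mpr h), if_neg (fun hc => lt_asymm h (hC1iff.mp hc))]
          simp
        · rw [if_neg (fun hc => lt_asymm h (hC2iff.mp hc)), if_pos (hC1iff.mpr h)]
          simp
      rw [hS]
      have hexp : (if j = l then 1 else 0) + (if j = q then 1 else 0) +
          (if k = l then 1 else 0) + (if k = q then 1 else 0) = 1 := by
        rcases Sym2.mem_iff.mp hvm1 with rfl | rfl <;>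
          rcases Sym2.mem_iff.mp hvm2 with rfl | rfl
        · have h1 : v ≠ q := hlq.ne
          have h2 : k ≠ v := hjk.ne'
          have h3 : k ≠ q := fun h => hne (by rw [h])
          simp [h1, h2, h3]
        · have h1 : v ≠ l := hlq.ne'
          have h2 : k ≠ l := fun h =>
            hne (by rw [h]; exact Sym2.eq_swap)
          have h3 : k ≠ v := hjk.ne'
          simp [h1, h2, h3]
        · have h1 : j ≠ v := hjk.ne
          have h2 : j ≠ q := fun h =>
            hne (by rw [h]; exact Sym2.eq_swap)
          have h3 : v ≠ q := hlq.ne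
          simp [h1, h2, h3]
        · have h1 : j ≠ l := fun h => hne (by rw [h])
          have h2 : j ≠ v := hjk.ne
          have h3 : v ≠ l := hlq.ne'
          simp [h1, h2, h3]
      rw [hexp, pow_one]
    · push_neg at hsh
      have hC2 : ¬((l ∈ s(j, k) ∧ rank l s(j, k) < rank l s(l, q)) ∨
          (q ∈ s(j, k) ∧ rank q s(j, k) < rank q s(l, q))) := by
        rintro (⟨h', _⟩ | ⟨h', _⟩)
        · exact hsh l h' (Sym2.mem_iff.mpr (Or.inl rfl))
        · exact hsh q h' (Sym2.mem_iff.mpr (Or.inr rfl))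
      have hC1 : ¬((j ∈ s(l, q) ∧ rank j s(l, q) < rank j s(j, k)) ∨
          (k ∈ s(l, q) ∧ rank k s(l, q) < rank k s(j, k))) := by
        rintro (⟨h', _⟩ | ⟨h', _⟩)
        · exact hsh j (Sym2.mem_iff.mpr (Or.inl rfl)) h'
        · exact hsh k (Sym2.mem_iff.mpr (Or.inr rfl)) h'
      rw [if_neg hC2, if_neg hC1]
      have h1 : j ≠ l := fun h =>
        hsh j (Sym2.mem_iff.mpr (Or.inl rfl)) (Sym2.mem_iff.mpr (Or.inl h))
      have h2 : j ≠ q := fun h =>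
        hsh j (Sym2.mem_iff.mpr (Or.inl rfl)) (Sym2.mem_iff.mpr (Or.inr h))
      have h3 : k ≠ l := fun h =>
        hsh k (Sym2.mem_iff.mpr (Or.inr rfl)) (Sym2.mem_iff.mpr (Or.inl h))
      have h4 : k ≠ q := fun h =>
        hsh k (Sym2.mem_iff.mpr (Or.inr rfl)) (Sym2.mem_iff.mpr (Or.inr h))
      simp [h1, h2, h3, h4]
  · -- product of all B's is 1
    intro L hnd hall
    have key : ∀ L' : List V, (L'.map (BtSF G)).prod =
        PauliMatrix (fun e : ↥G.edgeSet =>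
          if Even (L'.countP fun j => decide (j ∈ (e : Sym2 V))) then P1.I else P1.Z) := by
      intro L'
      induction L' with
      | nil => simp [PauliMatrix_one]
      | cons a L'' ih =>
        rw [List.map_cons, List.prod_cons, ih, hB, PauliMatrix_mul,
          Finset.prod_eq_one fun e _ => P1.ph_ZI (by split <;> simp) (by split <;> simp),
          one_smul]
        refine congrArg PauliMatrix (funext fun e => ?_)
        rw [List.countP_cons]
        by_cases ha : a ∈ (e : Sym2 V) <;>
          by_cases hev : Even (L''.countP fun j => decide (j ∈ (e : Sym2 V))) <;>
          simp [ha, hev, Nat.even_add_one, P1.mulP]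
    rw [key L]
    have hc : ∀ e : ↥G.edgeSet, (L.countP fun j => decide (j ∈ (e : Sym2 V))) = 2 := by
      rintro ⟨e, he⟩
      induction e using Sym2.ind with
      | _ x y =>
        have hxy : x ≠ y := (G.mem_edgeSet.mp he).ne
        rw [List.countP_eq_length_filter, ← List.toFinset_card_of_nodup (hnd.filter _),
          List.toFinset_filter]
        have hu : L.toFinset = Finset.univ :=
          Finset.eq_univ_iff_forall.mpr fun v => List.mem_toFinset.mpr (hall v)
        rw [hu]
        rw [show Finset.univ.filter (fun a : V => decide (a ∈ (((⟨s(x,y), he⟩ : ↥G.edgeSet)) : Sym2 V)) = true) = ({x, y} : Finset V) from by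
          ext v; simp [Sym2.mem_iff]]
        exact Finset.card_pair hxy
    calc PauliMatrix (fun e : ↥G.edgeSet =>
          if Even (L.countP fun j => decide (j ∈ (e : Sym2 V))) then P1.I else P1.Z)
        = PauliMatrix (fun _ : ↥G.edgeSet => P1.I) := by
          refine congrArg PauliMatrix (funext fun e => ?_); rw [hc e]; norm_num
      _ = 1 := PauliMatrix_one
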